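/- arXiv:2511.05333 — 2 statements merged into one kernel-verified Lean document; each statement's English description precedes it below -/
import Mathlib

section
/- Let H₀(x,y) = (ω/ε)S(x,y) + (1/2)(N(x) - Q(y) + Q(y)²) with N(x)=x₁²+x₂², Q(y)=y₁²+y₂², S(x,y)=x₁y₂-x₂y₁, and let Γ₀(u,θ) = (δ₀(u,θ), γ₀(u,θ)) with γ₀(u,θ) = (cos θ/cosh u, sin θ/cosh u) and δ₀(u,θ) = ((sinh u/cosh²u)cos θ, (sinh u/cosh²u)sin θ). Then H₀(Γ₀(u,θ)) = 0 for all (u,θ), and the curve t ↦ Γ₀(u+t, θ + (ω/ε)t) is a solution of the Hamiltonian system associated with H₀ (with symplectic form dx₁∧dy₁ + dx₂∧dy₂). -/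
/-- r(u) = 1/cosh u. -/
noncomputable def rHom (u : ℝ) : ℝ := 1 / Real.cosh u

/-- R(u) = sinh u/cosh² u. -/
noncomputable def RHom (u : ℝ) : ℝ := Real.sinh u / Real.cosh u ^ 2

/-- The truncated normal form Hamiltonian
H₀(x,y) = (ω/ε)S + (1/2)(N - Q + Q²). -/
noncomputable def H0 (ω ε : ℝ) (x y : ℝ × ℝ) : ℝ :=
  (ω / ε) * (x.1 * y.2 - x.2 * y.1)
    + (1/2) * ((x.1^2 + x.2^2) - (y.1^2 + y.2^2) + (y.1^2 + y.2^2)^2)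

/-!
Writing `x = R (cos φ, sin φ)` and `y = r (cos φ, sin φ)` with a common angle `φ` kills the
angular momentum `S`, so `H₀ = (R² - r² + r⁴)/2` is independent of `φ` and Hamilton's equations
split into the rotation `φ̇ = ω/ε` and the planar system `ṙ = -R`, `Ṙ = 2r³ - r`.
For `r = 1/cosh` and `R = sinh/cosh²` this system holds, and `R² = r² - r⁴` puts the curve on `H₀ = 0`.
-/

open Real

theorem H0_polar (ω ε R r φ : ℝ) :
    H0 ω ε (R * cos φ, R * sin φ) (r * cos φ, r * sin φ) = (R ^ 2 - r ^ 2 + r ^ 4) / 2 := by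
  simp only [H0]
  linear_combination (R ^ 2 - r ^ 2 + r ^ 4 * (sin φ ^ 2 + cos φ ^ 2 + 1)) / 2 * sin_sq_add_cos_sq φ

theorem RHom_sq (u : ℝ) : RHom u ^ 2 = rHom u ^ 2 - rHom u ^ 4 := by
  have hc := (cosh_pos u).ne'
  simp only [RHom, rHom, div_pow, sinh_sq]
  field_simp

theorem hasDerivAt_rHom (u : ℝ) : HasDerivAt rHom (-RHom u) u := by
  refine ((hasDerivAt_const u (1 : ℝ)).div (hasDerivAt_cosh u) (cosh_pos u).ne').congr_deriv ?_
  rw [RHom]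
  ring

theorem hasDerivAt_RHom (u : ℝ) : HasDerivAt RHom (2 * rHom u ^ 3 - rHom u) u := by
  have hc := (cosh_pos u).ne'
  refine ((hasDerivAt_sinh u).div ((hasDerivAt_cosh u).pow 2) (pow_ne_zero 2 hc)).congr_deriv ?_
  simp only [rHom, Pi.pow_apply]
  field_simp
  linear_combination (-2 * cosh u) * sinh_sq u

section Rotation

variable {f : ℝ → ℝ} {f' t : ℝ}

theorem HasDerivAt.mul_cos_affine (θ c : ℝ) (hf : HasDerivAt f f' t) :
    HasDerivAt (fun s => f s * Real.cos (θ + c * s))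
      (f' * Real.cos (θ + c * t) - c * f t * Real.sin (θ + c * t)) t := by
  refine (hf.mul ((hasDerivAt_const_mul c).const_add θ).cos).congr_deriv ?_
  ring

theorem HasDerivAt.mul_sin_affine (θ c : ℝ) (hf : HasDerivAt f f' t) :
    HasDerivAt (fun s => f s * Real.sin (θ + c * s))
      (f' * Real.sin (θ + c * t) + c * f t * Real.cos (θ + c * t)) t := by
  refine (hf.mul ((hasDerivAt_const_mul c).const_add θ).sin).congr_deriv ?_
  ring

end Rotation

theorem homoclinic_is_solution_general (ω ε : ℝ) (u θ : ℝ) :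
    let X₁ : ℝ → ℝ := fun t => RHom (u + t) * Real.cos (θ + (ω/ε) * t)
    let X₂ : ℝ → ℝ := fun t => RHom (u + t) * Real.sin (θ + (ω/ε) * t)
    let Y₁ : ℝ → ℝ := fun t => rHom (u + t) * Real.cos (θ + (ω/ε) * t)
    let Y₂ : ℝ → ℝ := fun t => rHom (u + t) * Real.sin (θ + (ω/ε) * t)
    (∀ t, H0 ω ε (X₁ t, X₂ t) (Y₁ t, Y₂ t) = 0) ∧
    ∀ t : ℝ,
      HasDerivAt X₁ (-(ω/ε) * X₂ t - Y₁ t + 2 * ((Y₁ t)^2 + (Y₂ t)^2) * Y₁ t) t ∧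
      HasDerivAt X₂ ((ω/ε) * X₁ t - Y₂ t + 2 * ((Y₁ t)^2 + (Y₂ t)^2) * Y₂ t) t ∧
      HasDerivAt Y₁ (-((ω/ε) * Y₂ t + X₁ t)) t ∧
      HasDerivAt Y₂ (-(-(ω/ε) * Y₁ t + X₂ t)) t := by
  intro X₁ X₂ Y₁ Y₂
  refine ⟨fun t => by simp only [X₁, X₂, Y₁, Y₂, H0_polar, RHom_sq]; ring, fun t => ?_⟩
  have hr := (hasDerivAt_rHom (u + t)).comp_const_add u t
  have hR := (hasDerivAt_RHom (u + t)).comp_const_add u t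
  have hcs := sin_sq_add_cos_sq (θ + ω / ε * t)
  refine ⟨(hR.mul_cos_affine θ (ω / ε)).congr_deriv ?_, (hR.mul_sin_affine θ (ω / ε)).congr_deriv ?_,
    (hr.mul_cos_affine θ (ω / ε)).congr_deriv ?_, (hr.mul_sin_affine θ (ω / ε)).congr_deriv ?_⟩
  · linear_combination (-2 * rHom (u + t) ^ 3 * cos (θ + ω / ε * t)) * hcs
  · linear_combination (-2 * rHom (u + t) ^ 3 * sin (θ + ω / ε * t)) * hcs
  · ring
  · ring

/-- H₀ vanishes on Γ₀ and the curve t ↦ Γ₀(u+t, θ+(ω/ε)t) solves the Hamiltonian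
system of H₀ (with symplectic form dx₁∧dy₁ + dx₂∧dy₂, i.e. ẋ = ∂_y H₀, ẏ = -∂_x H₀). -/
theorem homoclinic_is_solution (ω ε : ℝ) (hω : 0 < ω) (hε : 0 < ε) (u θ : ℝ) :
    let X₁ : ℝ → ℝ := fun t => RHom (u + t) * Real.cos (θ + (ω/ε) * t)
    let X₂ : ℝ → ℝ := fun t => RHom (u + t) * Real.sin (θ + (ω/ε) * t)
    let Y₁ : ℝ → ℝ := fun t => rHom (u + t) * Real.cos (θ + (ω/ε) * t)
    let Y₂ : ℝ → ℝ := fun t => rHom (u + t) * Real.sin (θ + (ω/ε) * t)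
    (∀ t, H0 ω ε (X₁ t, X₂ t) (Y₁ t, Y₂ t) = 0) ∧
    ∀ t : ℝ,
      HasDerivAt X₁ (-(ω/ε) * X₂ t - Y₁ t + 2 * ((Y₁ t)^2 + (Y₂ t)^2) * Y₁ t) t ∧
      HasDerivAt X₂ ((ω/ε) * X₁ t - Y₂ t + 2 * ((Y₁ t)^2 + (Y₂ t)^2) * Y₂ t) t ∧
      HasDerivAt Y₁ (-((ω/ε) * Y₂ t + X₁ t)) t ∧
      HasDerivAt Y₂ (-(-(ω/ε) * Y₁ t + X₂ t)) t :=
  homoclinic_is_solution_general ω ε u θ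
end

section
/- Let H₀(x,y) = (ω/ε)S + (1/2)(N - Q + Q²) with N = x₁²+x₂², Q = y₁²+y₂², S = x₁y₂-x₂y₁, and suppose T : U × ℝ → ℝ is differentiable, where γ₀(u,θ) = (r(u)cosθ, r(u)sinθ), δ₀(u,θ) = (R(u)cosθ, R(u)sinθ), r = 1/cosh, R = -r'. Then, at points where R(u) ≠ 0 and r(u) ≠ 0, H₀(δ₀ + (Dγ₀)^{-⊤}∇T, γ₀) = -(ω/ε)∂_θT - ∂_uT + (1/(2R²))(∂_uT)² + (1/(2r²))(∂_θT)², where (Dγ₀)^{-⊤} is the inverse transpose of the Jacobian of γ₀ with respect to (u,θ) and ∇T = (∂_uT, ∂_θT)^⊤. -/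
/-- Abstract algebraic form of the Hamilton–Jacobi identity: for any nonzero `r`, `R`
satisfying `R² - r² + r⁴ = 0` and any `co`, `si` on the unit circle. -/
lemma hamilton_jacobi_key (k r R co si tu tt : ℝ) (hr : r ≠ 0) (hR : R ≠ 0)
    (h1 : R^2 - r^2 + r^4 = 0) (h2 : si^2 + co^2 = 1) :
    k * ((R * co + (-(1/R) * co * tu - (1/r) * si * tt)) * (r * si)
        - (R * si + (-(1/R) * si * tu + (1/r) * co * tt)) * (r * co))
      + (1/2) * (((R * co + (-(1/R) * co * tu - (1/r) * si * tt))^2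
            + (R * si + (-(1/R) * si * tu + (1/r) * co * tt))^2)
          - ((r * co)^2 + (r * si)^2) + ((r * co)^2 + (r * si)^2)^2)
      = -k*tt - tu + (1/(2*R^2))*tu^2 + (1/(2*r^2))*tt^2 := by
  have hr4 : r * r⁻¹ = 1 := mul_inv_cancel₀ hr
  have hR4 : R * R⁻¹ = 1 := mul_inv_cancel₀ hR
  linear_combination
      (-k*tt*r*r⁻¹ + (1/2)*(R^2 - 2*tu*R*R⁻¹ + tu^2*R⁻¹^2 + tt^2*r⁻¹^2)
        - (1/2)*r^2 + (1/2)*r^4*(si^2+co^2+1)) * h2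
    + (-k*tt) * hr4 + (-tu) * hR4 + (1/2) * h1

/-- The algebraic identity turning the Hamilton–Jacobi equation into a quasilinear
PDE: with x = δ₀ + (Dγ₀)⁻ᵀ ∇T and y = γ₀, at points where R(u) ≠ 0 and r(u) ≠ 0,
H₀(x,y) = -(ω/ε)∂_θT - ∂_uT + (1/(2R²))∂_uT² + (1/(2r²))∂_θT². -/
theorem hamilton_jacobi_identity (ω ε : ℝ) (T : ℝ → ℝ → ℝ)
    (hT : Differentiable ℝ (fun p : ℝ × ℝ => T p.1 p.2)) (u θ : ℝ)
    (hR : Real.sinh u / Real.cosh u ^ 2 ≠ 0) (hr : (1:ℝ) / Real.cosh u ≠ 0) :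
    let r : ℝ := 1 / Real.cosh u
    let R : ℝ := Real.sinh u / Real.cosh u ^ 2
    let Tu : ℝ := deriv (fun s => T s θ) u
    let Tθ : ℝ := deriv (fun s => T u s) θ
    let x₁ : ℝ := R * Real.cos θ + (-(1/R) * Real.cos θ * Tu - (1/r) * Real.sin θ * Tθ)
    let x₂ : ℝ := R * Real.sin θ + (-(1/R) * Real.sin θ * Tu + (1/r) * Real.cos θ * Tθ)
    let y₁ : ℝ := r * Real.cos θ
    let y₂ : ℝ := r * Real.sin θ
    (ω/ε) * (x₁*y₂ - x₂*y₁)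
      + (1/2) * ((x₁^2+x₂^2) - (y₁^2+y₂^2) + (y₁^2+y₂^2)^2)
      = -(ω/ε)*Tθ - Tu + (1/(2*R^2))*Tu^2 + (1/(2*r^2))*Tθ^2 := by
  intro r R Tu Tθ x₁ x₂ y₁ y₂
  have hc : Real.cosh u ≠ 0 := (Real.cosh_pos u).ne'
  have h1 : R^2 - r^2 + r^4 = 0 := by
    have hch : Real.cosh u ^ 2 - Real.sinh u ^ 2 = 1 := Real.cosh_sq_sub_sinh_sq u
    simp only [R, r]
    field_simp
    linear_combination (-1) * hch
  have h2 : Real.sin θ ^ 2 + Real.cos θ ^ 2 = 1 := Real.sin_sq_add_cos_sq θ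
  simpa only [x₁, x₂, y₁, y₂] using
    hamilton_jacobi_key (ω/ε) r R (Real.cos θ) (Real.sin θ) Tu Tθ hr hR h1 h2
end
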